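/- The Matching Best Fit algorithm is monotone: for any finite sequence of items with sizes in (0,1], removing one item does not increase the number of bins opened by Matching Best Fit. -/

import Mathlib

/-!
Run Matching Best Fit with and without the extra item `x` side by side. Once `x` has been
processed, the open bins of the two runs (each holding one large item) differ by at most one
bin, and the run with `x` has opened at least as many bins, strictly more if it is the one
holding the extra bin. Every later item preserves this: an extra open bin can only absorb a
small item for which the other run opens a new bin, which uses up the lead, or exchange which
bin is the extra one.
-/

/-- One step of Matching Best Fit.  The state is the list of sizes of the open bins,
each of which contains a single large item, together with the number of bins opened
so far.  A large item (size `> 1/2`) opens a new bin; a small item is placed into the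
fullest open bin (the one with the largest large item) into which it fits, closing
that bin, and otherwise opens a new bin that is immediately closed. -/
noncomputable def mbfStep (s : List ℝ × ℕ) (x : ℝ) : List ℝ × ℕ :=
  if 1 / 2 < x then (x :: s.1, s.2 + 1)
  else
    match (s.1.filter (fun y => decide (y + x ≤ 1))).max? with
    | some m => (s.1.erase m, s.2)
    | none => (s.1, s.2 + 1)

/-- The number of bins Matching Best Fit opens on the sequence `l`. -/
noncomputable def mbfCost (l : List ℝ) : ℕ := (l.foldl mbfStep ([], 0)).2

namespace List

theorem Perm.max?_eq {α : Type*} [LinearOrder α] {l l' : List α} (h : l ~ l') :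
    l.max? = l'.max? := by
  cases hl : l'.max? with
  | none => rw [max?_eq_none_iff] at hl ⊢; exact (hl ▸ h).eq_nil
  | some m =>
    rw [max?_eq_some_iff] at hl ⊢
    simpa only [h.mem_iff] using hl

theorem exists_perm_erase_cons_of_mem {α : Type*} [DecidableEq α] {A : List α} {u m w : α}
    (hm : m ∈ A) (hw : w = u ∨ w = m) : ∃ v, (u :: A).erase w ~ v :: A.erase m := by
  by_cases hwu : w = u
  · subst hwu
    exact ⟨m, by simpa using perm_cons_erase hm⟩
  · obtain rfl := hw.resolve_left hwu
    rw [erase_cons_tail (by simpa using Ne.symm hwu)]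
    exact ⟨u, Perm.refl _⟩

end List

open List

noncomputable def fittingBins (A : List ℝ) (y : ℝ) : List ℝ :=
  A.filter fun z => decide (z + y ≤ 1)

section MbfStep

variable {A : List ℝ} {a : ℕ} {y : ℝ}

theorem mbfStep_of_half_lt (hy : 1 / 2 < y) : mbfStep (A, a) y = (y :: A, a + 1) := by
  simp only [mbfStep, if_pos hy]

theorem mbfStep_of_max?_eq_some {m : ℝ} (hy : ¬1 / 2 < y)
    (hm : (fittingBins A y).max? = some m) : mbfStep (A, a) y = (A.erase m, a) := by
  simp only [fittingBins] at hm
  simp only [mbfStep, if_neg hy, hm]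

theorem mbfStep_of_max?_eq_none (hy : ¬1 / 2 < y) (hm : (fittingBins A y).max? = none) :
    mbfStep (A, a) y = (A, a + 1) := by
  simp only [fittingBins] at hm
  simp only [mbfStep, if_neg hy, hm]

theorem max?_fittingBins_cons (u : ℝ) :
    (fittingBins (u :: A) y).max? =
      if u + y ≤ 1 then some ((fittingBins A y).max?.elim u (max u))
      else (fittingBins A y).max? := by
  by_cases hu : u + y ≤ 1 <;> simp [fittingBins, hu, max?_cons]

end MbfStep

theorem mbfStep_perm {A B : List ℝ} (h : A ~ B) (y : ℝ) (a b : ℕ) :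
    (mbfStep (A, a) y).1 ~ (mbfStep (B, b) y).1 ∧
      (mbfStep (A, a) y).2 + b = (mbfStep (B, b) y).2 + a := by
  by_cases hy : 1 / 2 < y
  · simp only [mbfStep_of_half_lt hy]
    exact ⟨h.cons y, by omega⟩
  have hmax : (fittingBins A y).max? = (fittingBins B y).max? := (h.filter _).max?_eq
  cases hA : (fittingBins A y).max? with
  | none =>
    simp only [mbfStep_of_max?_eq_none hy hA, mbfStep_of_max?_eq_none hy (hmax ▸ hA)]
    exact ⟨h, by omega⟩
  | some m =>
    simp only [mbfStep_of_max?_eq_some hy hA, mbfStep_of_max?_eq_some hy (hmax ▸ hA)]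
    exact ⟨h.erase m, by omega⟩

/-- The item may go into `u` instead of the bin the other run fills, so the extra bin `v` that
survives need not be `u`. -/
theorem mbfStep_cons (u y : ℝ) (A : List ℝ) (a b : ℕ) :
    (∃ v, (mbfStep (u :: A, b) y).1 ~ v :: (mbfStep (A, a) y).1 ∧
        (mbfStep (u :: A, b) y).2 + a = (mbfStep (A, a) y).2 + b) ∨
      ((mbfStep (u :: A, b) y).1 ~ (mbfStep (A, a) y).1 ∧
        (mbfStep (u :: A, b) y).2 + a + 1 = (mbfStep (A, a) y).2 + b) := by
  by_cases hy : 1 / 2 < y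
  · simp only [mbfStep_of_half_lt hy]
    exact Or.inl ⟨u, Perm.swap u y A, by omega⟩
  have hcons := max?_fittingBins_cons (A := A) (y := y) u
  cases hA : (fittingBins A y).max? with
  | none =>
    by_cases hu : u + y ≤ 1
    · simp only [hA, hu, if_true, Option.elim_none] at hcons
      simp only [mbfStep_of_max?_eq_none hy hA, mbfStep_of_max?_eq_some hy hcons,
        erase_cons_head]
      exact Or.inr ⟨Perm.refl A, by omega⟩
    · simp only [hA, hu, if_false] at hcons
      simp only [mbfStep_of_max?_eq_none hy hA, mbfStep_of_max?_eq_none hy hcons]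
      exact Or.inl ⟨u, Perm.refl _, by omega⟩
  | some m =>
    have hmA : m ∈ A := (mem_filter.1 (max?_mem hA)).1
    obtain ⟨w, hw, huw⟩ : ∃ w, (fittingBins (u :: A) y).max? = some w ∧ (w = u ∨ w = m) := by
      by_cases hu : u + y ≤ 1
      · simp only [hA, hu, if_true, Option.elim_some] at hcons
        exact ⟨_, hcons, max_choice u m⟩
      · simp only [hA, hu, if_false] at hcons
        exact ⟨m, hcons, Or.inr rfl⟩
    obtain ⟨v, hv⟩ := exists_perm_erase_cons_of_mem hmA huw
    simp only [mbfStep_of_max?_eq_some hy hA, mbfStep_of_max?_eq_some hy hw]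
    exact Or.inl ⟨v, hv, by omega⟩

def MbfCoupled (s t : List ℝ × ℕ) : Prop :=
  (s.1 ~ t.1 ∧ s.2 ≤ t.2) ∨ (∃ u, t.1 ~ u :: s.1 ∧ s.2 < t.2) ∨
    (∃ m, s.1 ~ m :: t.1 ∧ s.2 ≤ t.2)

namespace MbfCoupled

theorem snd_le {s t : List ℝ × ℕ} (h : MbfCoupled s t) : s.2 ≤ t.2 := by
  rcases h with ⟨-, h⟩ | ⟨-, -, h⟩ | ⟨-, -, h⟩ <;> omega

theorem self_mbfStep (s : List ℝ × ℕ) (x : ℝ) : MbfCoupled s (mbfStep s x) := by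
  obtain ⟨A, a⟩ := s
  by_cases hx : 1 / 2 < x
  · rw [mbfStep_of_half_lt hx]
    exact Or.inr (Or.inl ⟨x, Perm.refl _, Nat.lt_succ_self a⟩)
  cases hA : (fittingBins A x).max? with
  | none =>
    rw [mbfStep_of_max?_eq_none hx hA]
    exact Or.inl ⟨Perm.refl A, Nat.le_succ a⟩
  | some m =>
    rw [mbfStep_of_max?_eq_some hx hA]
    exact Or.inr (Or.inr ⟨m, perm_cons_erase (mem_filter.1 (max?_mem hA)).1, le_rfl⟩)

theorem step {s t : List ℝ × ℕ} (h : MbfCoupled s t) (y : ℝ) :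
    MbfCoupled (mbfStep s y) (mbfStep t y) := by
  obtain ⟨A, a⟩ := s
  obtain ⟨B, b⟩ := t
  rcases h with ⟨hAB, hab⟩ | ⟨u, hBA, hab⟩ | ⟨m, hAB, hab⟩ <;> dsimp only at *
  · obtain ⟨hperm, hcost⟩ := mbfStep_perm hAB y a b
    exact Or.inl ⟨hperm, by omega⟩
  · obtain ⟨hperm, hcost⟩ := mbfStep_perm hBA y b b
    rcases mbfStep_cons u y A a b with ⟨v, hv, hcost'⟩ | ⟨hv, hcost'⟩
    · exact Or.inr (Or.inl ⟨v, hperm.trans hv, by omega⟩)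
    · exact Or.inl ⟨(hperm.trans hv).symm, by omega⟩
  · obtain ⟨hperm, hcost⟩ := mbfStep_perm hAB y a a
    rcases mbfStep_cons m y B b a with ⟨v, hv, hcost'⟩ | ⟨hv, hcost'⟩
    · exact Or.inr (Or.inr ⟨v, hperm.trans hv, by omega⟩)
    · exact Or.inl ⟨hperm.trans hv, by omega⟩

theorem foldl {s t : List ℝ × ℕ} (h : MbfCoupled s t) (l : List ℝ) :
    MbfCoupled (l.foldl mbfStep s) (l.foldl mbfStep t) := by
  induction l generalizing s t with
  | nil => exact h
  | cons y l ih => exact ih (h.step y)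

end MbfCoupled

theorem mbf_monotone_general (l₁ l₂ : List ℝ) (x : ℝ) :
    mbfCost (l₁ ++ l₂) ≤ mbfCost (l₁ ++ x :: l₂) := by
  simp only [mbfCost, foldl_append, foldl_cons]
  exact ((MbfCoupled.self_mbfStep _ x).foldl l₂).snd_le

/-- Matching Best Fit is monotone: removing one item from a sequence of items with
sizes in (0,1] does not increase the number of bins it opens. -/
theorem mbf_monotone (l₁ l₂ : List ℝ) (x : ℝ)
    (h : ∀ y ∈ l₁ ++ x :: l₂, 0 < y ∧ y ≤ 1) :
    mbfCost (l₁ ++ l₂) ≤ mbfCost (l₁ ++ x :: l₂) :=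
  mbf_monotone_general l₁ l₂ x
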